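/- There is a closed λ-term succ_λ of Λ_det and a constant c such that for every value k and every natural number n, succ_λ k ⟨n̂⟩ →det^m k ⟨succ(n̂)⟩ where m ≤ c·(log₂(n+1)+1), i.e. the successor of a binary counter is computed in O(log n) →det-steps. -/

import Mathlib

namespace LogTM

/-- Untyped λ-terms with de Bruijn indices. -/
inductive Lam : Type
  | var : ℕ → Lam
  | lam : Lam → Lam
  | app : Lam → Lam → Lam

namespace Lam

/-- Values: variables and abstractions. -/
def IsValue : Lam → Prop
  | var _ => True
  | lam _ => True
  | app _ _ => False

/-- Terms of the deterministic λ-calculus `Λ_det`: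
    the argument of every application is a value. -/
def InDet : Lam → Prop
  | var _ => True
  | lam t => InDet t
  | app t u => InDet t ∧ InDet u ∧ IsValue u

/-- Shift the free variables `≥ d` by one. -/
def lift : ℕ → Lam → Lam
  | d, var n => if n < d then var n else var (n + 1)
  | d, lam t => lam (lift (d + 1) t)
  | d, app t u => app (lift d t) (lift d u)

/-- Capture-avoiding substitution `t[k := u]`. -/
def subst : Lam → ℕ → Lam → Lam
  | var n, k, u => if n < k then var n else if n = k then u else var (n - 1)
  | lam t, k, u => lam (subst t (k + 1) (lift 0 u))
  | app t s, k, u => app (subst t k u) (subst s k u)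

/-- Weak evaluation `→det` of the deterministic λ-calculus: β at the root,
    closed under evaluation contexts `E ::= ⟨·⟩ | E v`. -/
inductive Step : Lam → Lam → Prop
  | beta {t v : Lam} : IsValue v → Step (app (lam t) v) (subst t 0 v)
  | appL {t t' v : Lam} : IsValue v → Step t t' → Step (app t v) (app t' v)

/-- `n`-fold iteration of `→det`. -/
inductive StepN : ℕ → Lam → Lam → Prop
  | refl (t : Lam) : StepN 0 t t
  | head {n : ℕ} {t u r : Lam} : Step t u → StepN n u r → StepN (n + 1) t r

/-- All free variables are `< d`. -/
def ClosedUnder : ℕ → Lam → Prop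
  | d, var n => n < d
  | d, lam t => ClosedUnder (d + 1) t
  | d, app t u => ClosedUnder d t ∧ ClosedUnder d u

/-- Closed terms. -/
def Closed (t : Lam) : Prop := ClosedUnder 0 t

end Lam

/-- `n` nested abstractions. -/
def iterLam : ℕ → Lam → Lam
  | 0, t => t
  | n + 1, t => .lam (iterLam n t)

/-- Left-nested applications. -/
def mkApps : Lam → List Lam → Lam
  | t, [] => t
  | t, u :: us => mkApps (.app t u) us

/-- Scott encoding of the character `a` of a `k`-letter (ordered) alphabet:
    `⟨a_i⟩ = λx_1…λx_k.x_i`. -/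
def encChar (k : ℕ) (a : Fin k) : Lam := iterLam k (.var (k - 1 - (a : ℕ)))

/-- Scott encoding of strings over a `k`-letter (ordered) alphabet:
    `⟨ε⟩ = λx_1…λx_k.λx_ε.x_ε` and `⟨a_i·r⟩ = λx_1…λx_k.λx_ε.x_i ⟨r⟩`. -/
def encStr (k : ℕ) : List (Fin k) → Lam
  | [] => iterLam (k + 1) (.var 0)
  | a :: r => iterLam (k + 1) (.app (.var (k - (a : ℕ))) (encStr k r))

/-- Scott encoding of binary strings (alphabet `{0,1}`, `false = 0 < 1 = true`). -/
def encBits : List Bool → Lam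
  | [] => .lam (.lam (.lam (.var 0)))
  | false :: s => .lam (.lam (.lam (.app (.var 2) (encBits s))))
  | true :: s => .lam (.lam (.lam (.app (.var 1) (encBits s))))

/-- Successor on reversed binary strings. -/
def rsucc : List Bool → List Bool
  | [] => [true]
  | false :: s => true :: s
  | true :: s => false :: rsucc s

/-- Predecessor on (nonempty) reversed binary strings. -/
def rpred : List Bool → List Bool
  | [] => []
  | false :: s => true :: rpred s
  | [true] => []
  | true :: b :: s => false :: b :: s

/-- Lookup of the `(n+1)`-th character of a string using a reversed-binary counter. -/
def rlookup {α : Type*} : List Bool → List α → Option α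
  | _, [] => none
  | [], c :: _ => some c
  | b :: nb, _ :: s => rlookup (rpred (b :: nb)) s

/-- Input alphabet `B_I = {0, 1, L, R}`. -/
inductive BI : Type
  | b0 | b1 | bL | bR

/-- Work alphabet `B_W = {0, 1, □}`. -/
inductive BW : Type
  | w0 | w1 | wB

/-- Input head moves `{-1, +1, 0}`. -/
inductive IDir : Type
  | minus | plus | zero

/-- Work head moves `{←, →, ↓}`. -/
inductive WDir : Type
  | left | right | stay

/-- A deterministic binary Turing machine with input: states `Fin Q`, initial state
    `qin`, final states `qT` and `qF`, and a partial transition function `δ` that is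
    undefined on the final states. -/
structure TM where
  Q : ℕ
  qin : Fin Q
  qT : Fin Q
  qF : Fin Q
  δ : BI → BW → Fin Q → Option (IDir × BW × WDir × Fin Q)
  δ_final : ∀ b a s, (s = qT ∨ s = qF) → δ b a s = none

/-- A configuration `(i, n | w_l, a, w_r | s)`: read-only input `i`, input-head
    position `n`, work tape `w_l, a, w_r` (head on `a`), current state `s`. -/
structure Config (M : TM) where
  input : List BI
  pos : ℕ
  left : List BW
  head : BW
  right : List BW
  state : Fin M.Q

/-- Final configurations: the state is `qT` or `qF`. -/
def Config.Final {M : TM} (C : Config M) : Prop := C.state = M.qT ∨ C.state = M.qF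

/-- One machine transition, as a partial function (the relation `C →M D` is
    `M.step C = some D`). -/
def TM.step (M : TM) (C : Config M) : Option (Config M) :=
  match C.input[C.pos]? with
  | none => none
  | some b =>
    match M.δ b C.head C.state with
    | none => none
    | some (d, a', mv, s') =>
      let pos' : ℕ :=
        match d with
        | .minus => C.pos - 1
        | .plus => C.pos + 1
        | .zero => C.pos
      let w : List BW × BW × List BW :=
        match mv with
        | .stay => (C.left, a', C.right)
        | .left =>
          match C.left.getLast? with
          | none => ([], BW.wB, a' :: C.right)
          | some a'' => (C.left.dropLast, a'', a' :: C.right)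
        | .right =>
          match C.right with
          | [] => (C.left ++ [a'], BW.wB, [])
          | a'' :: r => (C.left ++ [a'], a'', r)
      some ⟨C.input, pos', w.1, w.2.1, w.2.2, s'⟩

/-- `n` machine transitions. -/
def TM.multiStep (M : TM) : ℕ → Config M → Option (Config M)
  | 0, C => some C
  | n + 1, C => (M.step C).bind (M.multiStep n)

/-- The fixed ordering `0 < 1 < L < R` of `B_I`. -/
def BI.toFin : BI → Fin 4
  | b0 => 0
  | b1 => 1
  | bL => 2
  | bR => 3

/-- The fixed ordering `0 < 1 < □` of `B_W`. -/
def BW.toFin : BW → Fin 3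
  | w0 => 0
  | w1 => 1
  | wB => 2

/-- Encoding of configurations:
    `⟨C⟩ = λx.(x ⟨i⟩ ⟨n̂⟩ ⟨w_l^R⟩ ⟨a⟩ ⟨w_r⟩ ⟨s⟩)`. -/
def encConfig {M : TM} (C : Config M) : Lam :=
  .lam (mkApps (.var 0)
    [encStr 4 (C.input.map BI.toFin),
     encBits (Nat.bits C.pos),
     encStr 3 (C.left.reverse.map BW.toFin),
     encChar 3 C.head.toFin,
     encStr 3 (C.right.map BW.toFin),
     encChar M.Q C.state])

/-- A bit as an input character. -/
def bitToBI (b : Bool) : BI := if b then .b1 else .b0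

/-- The initial configuration on binary input `i`: input tape `L·i·R`,
    input head at position `0`, empty work tape, initial state. -/
def initConfig (M : TM) (i : List Bool) : Config M :=
  ⟨BI.bL :: (i.map bitToBI) ++ [BI.bR], 0, [], BW.wB, [], M.qin⟩

/-- Scott-encoded booleans: `⟨true⟩ = λx.λy.x`, `⟨false⟩ = λx.λy.y`. -/
def encBool : Bool → Lam
  | true => .lam (.lam (.var 1))
  | false => .lam (.lam (.var 0))

/-!
Scott-encoded strings are their own case analysis, so the successor can be written in
continuation-passing style with recursion by self-application (`succLoop succLoop`): on `0·r`
and on `ε` the continuation receives the answer at once, while on `1·r` the loop recurses on `r`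
with the continuation extended by "prepend `0`". Each bit costs at most ten β-steps, and `n̂` has
at most `log₂ (n + 1) + 1` bits.
-/

namespace Lam

theorem ClosedUnder.mono : ∀ {t : Lam} {d d' : ℕ}, ClosedUnder d t → d ≤ d' → ClosedUnder d' t
  | var _, _, _, h, hle => lt_of_lt_of_le h hle
  | lam t, d, _, h, hle => ClosedUnder.mono (t := t) (d := d + 1) h (Nat.succ_le_succ hle)
  | app _ _, _, _, h, hle => ⟨h.1.mono hle, h.2.mono hle⟩

theorem lift_of_closedUnder : ∀ {t : Lam} {d : ℕ}, ClosedUnder d t → lift d t = t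
  | var n, d, h => by simp [lift, show n < d from h]
  | lam t, d, h => by simp [lift, lift_of_closedUnder (t := t) (d := d + 1) h]
  | app _ _, _, h => by simp [lift, lift_of_closedUnder h.1, lift_of_closedUnder h.2]

theorem subst_of_closedUnder : ∀ {t : Lam} {d : ℕ} {u : Lam}, ClosedUnder d t → subst t d u = t
  | var n, d, _, h => by simp [subst, show n < d from h]
  | lam t, d, _, h => by simp [subst, subst_of_closedUnder (t := t) (d := d + 1) h]
  | app _ _, _, _, h => by simp [subst, subst_of_closedUnder h.1, subst_of_closedUnder h.2]

@[simp] theorem lift_of_closed {t : Lam} (h : t.Closed) (d : ℕ) : lift d t = t :=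
  lift_of_closedUnder (h.mono d.zero_le)

@[simp] theorem subst_of_closed {t : Lam} (h : t.Closed) (d : ℕ) (u : Lam) : subst t d u = t :=
  subst_of_closedUnder (h.mono d.zero_le)

@[simp] theorem subst_lift : ∀ (t : Lam) (k : ℕ) (u : Lam), subst (lift k t) k u = t
  | var n, k, u => by
    by_cases h : n < k
    · simp [lift, subst, h]
    · simp only [lift, subst, h, if_false]
      rw [if_neg (by omega), if_neg (by omega), Nat.add_sub_cancel]
  | lam t, k, u => by simp [lift, subst, subst_lift t (k + 1)]
  | app t s, k, u => by simp [lift, subst, subst_lift t k u, subst_lift s k u]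

@[simp] theorem stepN_zero_iff {t u : Lam} : StepN 0 t u ↔ t = u :=
  ⟨fun h => by cases h; rfl, fun h => h ▸ .refl t⟩

theorem StepN.trans {m n : ℕ} {t u r : Lam} (h₁ : StepN m t u) (h₂ : StepN n u r) :
    StepN (m + n) t r := by
  induction h₁ with
  | refl => simpa using h₂
  | head s _ ih => exact Nat.add_right_comm _ 1 n ▸ .head s (ih h₂)

theorem Step.mkApps_left {t t' : Lam} (h : Step t t') :
    ∀ {vs : List Lam}, (∀ v ∈ vs, v.IsValue) → Step (mkApps t vs) (mkApps t' vs)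
  | [], _ => h
  | _ :: _, hvs => (Step.appL (hvs _ (.head _)) h).mkApps_left fun v hv => hvs v (.tail _ hv)

theorem StepN.mkApps_left {m : ℕ} {t t' : Lam} {vs : List Lam} (h : StepN m t t')
    (hvs : ∀ v ∈ vs, v.IsValue) : StepN m (mkApps t vs) (mkApps t' vs) := by
  induction h with
  | refl => exact .refl _
  | head s _ ih => exact .head (s.mkApps_left hvs) ih

theorem StepN.head_beta {n : ℕ} {t v r : Lam} (vs : List Lam) (hv : v.IsValue)
    (hvs : ∀ w ∈ vs, w.IsValue) (h : StepN n (mkApps (subst t 0 v) vs) r) :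
    StepN (n + 1) (mkApps (app (lam t) v) vs) r :=
  .head ((Step.beta hv).mkApps_left hvs) h

end Lam

open Lam

theorem encBits_closed : ∀ s : List Bool, (encBits s).Closed
  | [] => by simp [encBits, Closed, ClosedUnder]
  | false :: s | true :: s => by
    simp only [encBits, Closed, ClosedUnder]
    exact ⟨by omega, (encBits_closed s).mono (by omega)⟩

theorem encBits_isValue : ∀ s : List Bool, (encBits s).IsValue
  | [] | false :: _ | true :: _ => trivial

theorem encBits_nil_apply {a₀ a₁ c : Lam} (h₀ : a₀.IsValue) (h₁ : a₁.IsValue) (hc : c.IsValue) :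
    StepN 3 (mkApps (encBits []) [a₀, a₁, c]) c := by
  refine .head_beta [a₁, c] h₀ (by simp [h₁, hc]) ?_
  refine .head_beta [c] h₁ (by simp [hc]) ?_
  refine .head_beta [] hc (by simp) ?_
  simp [subst, mkApps]

theorem encBits_cons_apply (b : Bool) (s : List Bool) {a₀ a₁ c : Lam} (h₀ : a₀.Closed)
    (h₁ : a₁.Closed) (hv₀ : a₀.IsValue) (hv₁ : a₁.IsValue) (hc : c.IsValue) :
    StepN 3 (mkApps (encBits (b :: s)) [a₀, a₁, c]) (.app (cond b a₁ a₀) (encBits s)) := by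
  have hs := encBits_closed s
  cases b <;>
  · refine .head_beta [a₁, c] hv₀ (by simp [hv₁, hc]) ?_
    refine .head_beta [c] hv₁ (by simp [hc]) ?_
    refine .head_beta [] hc (by simp) ?_
    simp [subst, mkApps, h₀, h₁, hs]

/-- `λr f k. k ⟨1·r⟩` -/
def succOnZero : Lam :=
  .lam (.lam (.lam (.app (.var 0) (.lam (.lam (.lam (.app (.var 1) (.var 5))))))))

/-- `λr f k. f f r (λr'. k ⟨0·r'⟩)` -/
def succOnOne : Lam :=
  .lam (.lam (.lam (mkApps (.var 1) [.var 1, .var 2,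
    .lam (.app (.var 1) (.lam (.lam (.lam (.app (.var 2) (.var 3))))))])))

/-- `λf k. k ⟨1⟩` -/
def succOnNil : Lam :=
  .lam (.lam (.app (.var 0) (encBits [true])))

/-- `λf s k. s succOnZero succOnOne succOnNil f k`, run as `succLoop succLoop`. -/
def succLoop : Lam :=
  .lam (.lam (.lam (mkApps (.var 1) [succOnZero, succOnOne, succOnNil, .var 2, .var 0])))

/-- `λk s. succLoop succLoop s k` -/
def succTerm : Lam :=
  .lam (.lam (mkApps succLoop [succLoop, .var 0, .var 1]))

/-- `λr. k ⟨0·r⟩` -/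
def consZeroCont (k : Lam) : Lam :=
  .lam (.app (lift 0 k) (.lam (.lam (.lam (.app (.var 2) (.var 3))))))

theorem succOnZero_closed : succOnZero.Closed := by simp [succOnZero, Closed, ClosedUnder]

theorem succOnOne_closed : succOnOne.Closed := by
  simp [succOnOne, mkApps, Closed, ClosedUnder]

theorem succOnNil_closed : succOnNil.Closed := by
  simp [succOnNil, Closed, ClosedUnder, (encBits_closed _).mono]

theorem succLoop_closed : succLoop.Closed := by
  simp [succLoop, mkApps, Closed, ClosedUnder, succOnZero_closed.mono, succOnOne_closed.mono,
    succOnNil_closed.mono]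

theorem succOnZero_apply (r : List Bool) {f k : Lam} (hf : f.IsValue) (hk : k.IsValue) :
    StepN 3 (mkApps succOnZero [encBits r, f, k]) (.app k (encBits (true :: r))) := by
  refine .head_beta [f, k] (encBits_isValue r) (by simp [hf, hk]) ?_
  refine .head_beta [k] hf (by simp [hk]) ?_
  refine .head_beta [] hk (by simp) ?_
  simp [subst, mkApps, encBits, encBits_closed]

theorem succOnOne_apply (r : List Bool) {f k : Lam} (hf : f.IsValue) (hk : k.IsValue) :
    StepN 3 (mkApps succOnOne [encBits r, f, k]) (mkApps f [f, encBits r, consZeroCont k]) := by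
  refine .head_beta [f, k] (encBits_isValue r) (by simp [hf, hk]) ?_
  refine .head_beta [k] hf (by simp [hk]) ?_
  refine .head_beta [] hk (by simp) ?_
  simp [subst, mkApps, consZeroCont, encBits_closed]

theorem succOnNil_apply {f k : Lam} (hf : f.IsValue) (hk : k.IsValue) :
    StepN 2 (mkApps succOnNil [f, k]) (.app k (encBits [true])) := by
  refine .head_beta [k] hf (by simp [hk]) ?_
  refine .head_beta [] hk (by simp) ?_
  simp [subst, mkApps, encBits_closed]

theorem consZeroCont_apply (k : Lam) (r : List Bool) :
    StepN 1 (.app (consZeroCont k) (encBits r)) (.app k (encBits (false :: r))) := by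
  refine .head_beta [] (encBits_isValue r) (by simp) ?_
  simp [subst, mkApps, encBits, encBits_closed]

theorem succLoop_apply (s : List Bool) {f k : Lam} (hf : f.Closed) (hfv : f.IsValue)
    (hk : k.IsValue) :
    StepN 3 (mkApps succLoop [f, encBits s, k])
      (mkApps (encBits s) [succOnZero, succOnOne, succOnNil, f, k]) := by
  refine .head_beta [encBits s, k] hfv (by simp [encBits_isValue, hk]) ?_
  refine .head_beta [k] (encBits_isValue s) (by simp [hk]) ?_
  refine .head_beta [] hk (by simp) ?_
  simp [subst, mkApps, hf, encBits_closed, succOnZero_closed, succOnOne_closed,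
    succOnNil_closed]

theorem succLoop_run (s : List Bool) {k : Lam} (hk : k.IsValue) :
    ∃ m ≤ 10 * s.length + 8,
      StepN m (mkApps succLoop [succLoop, encBits s, k]) (.app k (encBits (rsucc s))) := by
  induction s generalizing k with
  | nil =>
    have hcase := encBits_nil_apply (a₀ := succOnZero) (a₁ := succOnOne) (c := succOnNil)
      trivial trivial trivial
    refine ⟨3 + 3 + 2, le_rfl, ?_⟩
    exact ((succLoop_apply [] succLoop_closed trivial hk).trans
      (hcase.mkApps_left (by simp [hk]; trivial))).trans (succOnNil_apply trivial hk)
  | cons b s ih =>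
    have hcase := encBits_cons_apply b s succOnZero_closed succOnOne_closed trivial trivial
      (c := succOnNil) trivial
    have hdispatch := (succLoop_apply (b :: s) succLoop_closed trivial hk).trans
      (hcase.mkApps_left (vs := [succLoop, k]) (by simp [hk]; trivial))
    cases b with
    | false =>
      exact ⟨6 + 3, by simp only [List.length_cons]; omega,
        hdispatch.trans (succOnZero_apply s trivial hk)⟩
    | true =>
      obtain ⟨m, hm, hrun⟩ := ih (k := consZeroCont k) trivial
      refine ⟨6 + 3 + m + 1, by simp only [List.length_cons]; omega, ?_⟩
      exact ((hdispatch.trans (succOnOne_apply s trivial hk)).trans hrun).trans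
        (consZeroCont_apply k (rsucc s))

theorem succTerm_apply (s : List Bool) {k : Lam} (hk : k.IsValue) :
    StepN 2 (mkApps succTerm [k, encBits s]) (mkApps succLoop [succLoop, encBits s, k]) := by
  refine .head_beta [encBits s] hk (by simp [encBits_isValue]) ?_
  refine .head_beta [] (encBits_isValue s) (by simp) ?_
  simp [subst, mkApps, succLoop_closed]

theorem succTerm_closed : succTerm.Closed := by
  simp [succTerm, mkApps, Closed, ClosedUnder, succLoop_closed.mono]

theorem succTerm_inDet : succTerm.InDet := by
  simp [succTerm, succLoop, succOnZero, succOnOne, succOnNil, encBits, mkApps, InDet, IsValue]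

theorem length_bits_le_log (n : ℕ) : (Nat.bits n).length ≤ Nat.log 2 (n + 1) + 1 := by
  rw [Nat.size_eq_bits_len]
  exact Nat.size_le.mpr ((Nat.lt_succ_self n).trans (Nat.lt_pow_succ_log_self one_lt_two _))

/-- there is a closed λ-term `succ_λ` of `Λ_det` and a constant `c`
    such that for every value `k` and every `n`,
    `succ_λ k ⟨n̂⟩ →det^m k ⟨succ(n̂)⟩` with `m ≤ c·(log₂(n+1)+1)`. -/
theorem succ_term_correct :
    ∃ (succTm : Lam) (c : ℕ), succTm.Closed ∧ succTm.InDet ∧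
      ∀ kont : Lam, kont.IsValue → kont.InDet → ∀ n : ℕ,
        ∃ m : ℕ, m ≤ c * (Nat.log 2 (n + 1) + 1) ∧
          Lam.StepN m (.app (.app succTm kont) (encBits (Nat.bits n)))
            (.app kont (encBits (rsucc (Nat.bits n)))) := by
  refine ⟨succTerm, 20, succTerm_closed, succTerm_inDet, fun k hk _ n => ?_⟩
  obtain ⟨m, hm, hrun⟩ := succLoop_run (Nat.bits n) hk
  have hlen := length_bits_le_log n
  exact ⟨2 + m, by omega, (succTerm_apply _ hk).trans hrun⟩

end LogTM
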